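/- The supertrace transfer matrix of the inhomogeneous fundamental gl(M|N) chain enjoys the full gl(M|N) symmetry: for all 1 ≤ a, b ≤ n and all u ∈ ℂ, [Δ(E_{ab}), st(u)] = 0 in End(H). -/

import Mathlib

open scoped BigOperators

noncomputable section

namespace SuperSpin

/-- The ℤ₂-grading on `Fin n` (0-indexed): grade `0` for the first `M` indices,
grade `1` for the remaining ones.  `gr M i` is the grade of the (paper, 1-indexed)
index `i+1`. -/
def gr (M : ℕ) {n : ℕ} (i : Fin n) : ℕ := if (i : ℕ) < M then 0 else 1

/-- `End(V ⊗ V)` for `V = ℂⁿ`, as matrices indexed by pairs. -/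
abbrev E2 (n : ℕ) := Matrix (Fin n × Fin n) (Fin n × Fin n) ℂ

/-- The graded permutation operator `P (e_c ⊗ e_d) = (-1)^{[c][d]} e_d ⊗ e_c`. -/
def Pm (M n : ℕ) : E2 n :=
  Matrix.of fun p q =>
    if p.1 = q.2 ∧ p.2 = q.1 then ((-1 : ℂ) ^ (gr M q.1 * gr M q.2)) else 0

/-- The R-matrix `R(u) = u·id - hb·P`. -/
def Rm (M n : ℕ) (hb u : ℂ) : E2 n := u • (1 : E2 n) - hb • Pm M n

/-- The operator `Q (e_c ⊗ e_d) = δ_{cd} (-1)^{[d]} ∑_a e_a ⊗ e_a`. -/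
def Qm (M n : ℕ) : E2 n :=
  Matrix.of fun p q => if q.1 = q.2 ∧ p.1 = p.2 then ((-1 : ℂ) ^ (gr M q.2)) else 0

/-- Graded partial transposition in the second tensor factor. -/
def pt2 (M n : ℕ) (X : E2 n) : E2 n :=
  Matrix.of fun p q =>
    ((-1 : ℂ) ^ (gr M p.2 * gr M q.2 + gr M q.2)) * X (p.1, q.2) (q.1, p.2)

/-- Graded transposition of an `n × n` matrix: `(Aᵗ)_{ij} = (-1)^{[i][j]+[j]} A_{ji}`. -/
def gTr (M : ℕ) {n : ℕ} (A : Matrix (Fin n) (Fin n) ℂ) : Matrix (Fin n) (Fin n) ℂ :=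
  Matrix.of fun i j => ((-1 : ℂ) ^ (gr M i * gr M j + gr M j)) * A j i

/-- `A ⊗ id` acting on `V ⊗ V`. -/
def m1 {n : ℕ} (A : Matrix (Fin n) (Fin n) ℂ) : E2 n :=
  Matrix.of fun p q => A p.1 q.1 * (if p.2 = q.2 then 1 else 0)

/-- `id ⊗ A` acting on `V ⊗ V`. -/
def m2 {n : ℕ} (A : Matrix (Fin n) (Fin n) ℂ) : E2 n :=
  Matrix.of fun p q => (if p.1 = q.1 then 1 else 0) * A p.2 q.2

/-- `R₂₁(x) = P ∘ R(x) ∘ P`. -/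
def R21 (M n : ℕ) (hb u : ℂ) : E2 n := Pm M n * Rm M n hb u * Pm M n

/-- The graded reflection equation for a matrix-valued function `K`. -/
def GRE (M n : ℕ) (hb : ℂ) (K : ℂ → Matrix (Fin n) (Fin n) ℂ) : Prop :=
  ∀ u v : ℂ,
    Rm M n hb (u - v) * m1 (K u) * R21 M n hb (u + v) * m2 (K v)
      = m2 (K v) * Rm M n hb (u + v) * m1 (K u) * R21 M n hb (u - v)

/-- `End(V^{⊗m})`, with basis indexed by functions `Fin m → Fin n`. -/
abbrev Ten (n m : ℕ) := Matrix (Fin m → Fin n) (Fin m → Fin n) ℂ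

/-- The Koszul embedding of `X ∈ End(V ⊗ V)` acting on the factors `i < j` of
`V^{⊗ m}` (identity on the other factors, with the graded crossing signs produced
by conjugation with the adjacent graded permutation operators). -/
def kEmb (M n m : ℕ) (i j : Fin m) (X : E2 n) : Ten n m :=
  Matrix.of fun f g =>
    (if ∀ l, l ≠ i → l ≠ j → f l = g l then (1 : ℂ) else 0)
      * X (f i, f j) (g i, g j)
      * (-1 : ℂ) ^ ((gr M (f j) + gr M (g j)) *
          ∑ l ∈ Finset.univ.filter (fun l => i < l ∧ l < j), gr M (g l))

/-- The monodromy matrix `𝒯(u) = R_{1,2}(u-a₁) ⋯ R_{1,L+1}(u-a_L)` of the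
inhomogeneous fundamental chain, acting on `V ⊗ H = V^{⊗(L+1)}` (auxiliary space
in position `0`). -/
def Tmono (M n L : ℕ) (hb : ℂ) (a : Fin L → ℂ) (u : ℂ) : Ten n (L + 1) :=
  (List.ofFn fun k : Fin L => kEmb M n (L + 1) 0 k.succ (Rm M n hb (u - a k))).prod

/-- The block entry `X_{ab} ∈ End(H)` of an operator `X` on `V ⊗ H`. -/
def blk {n L : ℕ} (X : Ten n (L + 1)) (a b : Fin n) : Ten n L :=
  Matrix.of fun f g => X (Fin.cons a f) (Fin.cons b g)

/-- Supertrace transfer matrix `st(u) = ∑ (-1)^{[a]} 𝒯_{aa}(u)`. -/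
def stm (M n L : ℕ) (hb : ℂ) (a : Fin L → ℂ) (u : ℂ) : Ten n L :=
  ∑ i : Fin n, ((-1 : ℂ) ^ gr M i) • blk (Tmono M n L hb a u) i i

/-- Trace transfer matrix `t(u) = ∑ 𝒯_{aa}(u)`. -/
def tm (M n L : ℕ) (hb : ℂ) (a : Fin L → ℂ) (u : ℂ) : Ten n L :=
  ∑ i : Fin n, blk (Tmono M n L hb a u) i i

/-- The pseudovacuum `v⁺ = e₁ ⊗ ⋯ ⊗ e₁`. -/
def vplus (n L : ℕ) : (Fin L → Fin n) → ℂ :=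
  fun f => if ∀ l, (f l : ℕ) = 0 then 1 else 0

/-- The pseudovacuum weights `λ_j(w)` (paper index `j ≥ 1`):
`λ₁(w) = ∏ (w - a_m - hb)`, `λ_j(w) = ∏ (w - a_m)` for `j ≥ 2`. -/
def lamP (L : ℕ) (hb : ℂ) (a : Fin L → ℂ) (j : ℕ) (w : ℂ) : ℂ :=
  if j = 1 then ∏ m, (w - a m - hb) else ∏ m, (w - a m)

/-- `c_m = ∑_{l=1}^m (-1)^{[l]}` (so `c_0 = 0`). -/
def cP (M : ℕ) (m : ℕ) : ℂ := ∑ l ∈ Finset.range m, (if l < M then (1 : ℂ) else -1)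

/-- `λ'_k(w) = ∏_{m=1}^{k-1} λ_m(w + hb c_m) / ∏_{m=1}^{k} λ_m(w + hb c_{m-1})`
(paper index `k ≥ 1`). -/
def lamPr (M L : ℕ) (hb : ℂ) (a : Fin L → ℂ) (k : ℕ) (w : ℂ) : ℂ :=
  (∏ m ∈ Finset.Icc 1 (k - 1), lamP L hb a m (w + hb * cP M m)) /
    (∏ m ∈ Finset.Icc 1 k, lamP L hb a m (w + hb * cP M (m - 1)))

/-- The global generators `Δ(E_{ab}) = ∑_k E_{ab}^{(k)}` on `H = V^{⊗L}`. -/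
def Delta (M n L : ℕ) (a b : Fin n) : Ten n L :=
  ∑ k : Fin L, Matrix.of fun f g =>
    if f k = a ∧ g k = b ∧ ∀ l, l ≠ k → f l = g l then
      (-1 : ℂ) ^ ((gr M a + gr M b) *
        ∑ l ∈ Finset.univ.filter (fun l => l < k), gr M (g l))
    else 0

/-- The diagonal entry (at paper index `j`, `1 ≤ j ≤ n`) of the diagonal boundary
matrix with parameter `ξ` and blocks determined by `L₁ ≤ L₂`. -/
def kdval (ξ : ℂ) (L₁ L₂ : ℕ) (j : ℕ) (u : ℂ) : ℂ :=
  if L₁ < j ∧ j ≤ L₂ then u + ξ else ξ - u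

/-- The diagonal boundary matrix `K(u)`. -/
def Kdiag (n : ℕ) (ξ : ℂ) (L₁ L₂ : ℕ) (u : ℂ) : Matrix (Fin n) (Fin n) ℂ :=
  Matrix.diagonal fun j => kdval ξ L₁ L₂ ((j : ℕ) + 1) u

/-- An `n × n` matrix acting on the auxiliary (first) factor of `V^{⊗(L+1)}`. -/
def onAux {n L : ℕ} (A : Matrix (Fin n) (Fin n) ℂ) : Ten n (L + 1) :=
  Matrix.of fun f g => A (f 0) (g 0) * (if ∀ l, l ≠ 0 → f l = g l then 1 else 0)

/-- The double-row monodromy matrix `ℬ(u) = 𝒯(u) (K(u) ⊗ id_H) 𝒯(-u)⁻¹`. -/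
def Bmono (M n L : ℕ) (hb : ℂ) (a : Fin L → ℂ) (ξ : ℂ) (L₁ L₂ : ℕ) (u : ℂ) :
    Ten n (L + 1) :=
  Tmono M n L hb a u * onAux (Kdiag n ξ L₁ L₂ u) * (Tmono M n L hb a (-u))⁻¹

/-- The open-chain transfer matrix `b(u) = ∑ (-1)^{[a]} K⁺_{aa}(u) ℬ_{aa}(u)`. -/
def bop (M n L : ℕ) (hb : ℂ) (a : Fin L → ℂ) (ξ : ℂ) (L₁ L₂ : ℕ)
    (ξ' : ℂ) (L₁' L₂' : ℕ) (u : ℂ) : Ten n L :=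
  ∑ i : Fin n,
    (((-1 : ℂ) ^ gr M i) * Kdiag n ξ' L₁' L₂' u i i) •
      blk (Bmono M n L hb a ξ L₁ L₂ u) i i

/-- The functions `g_k(u)` of the open-chain pseudovacuum (paper index `k ≥ 1`). -/
def gP (M : ℕ) (hb ξ : ℂ) (L₁ L₂ : ℕ) (k : ℕ) (u : ℂ) : ℂ :=
  if k ≤ L₁ then ξ - u
  else if k ≤ L₂ then ξ + u - hb * cP M L₁
  else ξ - u - hb * (cP M L₁ - cP M L₂)

/-- The functions `a_k(u)` of the open-chain pseudovacuum (paper index `k ≥ 1`). -/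
def aP (M L : ℕ) (hb : ℂ) (a : Fin L → ℂ) (k : ℕ) (u : ℂ) : ℂ :=
  (if k ≤ M then (1 : ℂ) else -1) * hb *
    (2 * u * lamP L hb a k u * lamPr M L hb a k (-u)) /
    ((2 * u - hb * cP M k) * (2 * u - hb * cP M (k - 1)))

/-!
Each local generator `E_{ab}^{(k)}` and each graded swap `P_{0j}` has one nonzero entry per row,
so `E^{(k)} P_{0j} = P_{0j} E^{(swap 0 j k)}` reduces to a parity identity between Koszul signs.
Summing over `k`, the global generator `Δ'(E_{ab})` of `V ⊗ H` commutes with every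
`R_{0j}(u) = u - ħ P_{0j}`, hence with `𝒯(u)`. Its auxiliary blocks are
`Δ'(E_{ab})_{ic} = δ_{ia} δ_{cb} + δ_{ic} (-1)^{([a]+[b])[c]} Δ(E_{ab})`; summing the diagonal
blocks of `[Δ'(E_{ab}), 𝒯(u)] = 0` with weights `(-1)^{[i](1+[a]+[b])}`, the first terms give
the same multiple of `𝒯_{ba}(u)` on both sides, and what remains is `[Δ(E_{ab}), st(u)] = 0`.
-/

open Finset Function

lemma neg_one_pow_eq_of_natCast_eq {R : Type*} [Ring R] {A B : ℕ}
    (h : (A : ZMod 2) = B) : (-1 : R) ^ A = (-1) ^ B := by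
  rw [neg_one_pow_eq_pow_mod_two, neg_one_pow_eq_pow_mod_two (n := B),
    (ZMod.natCast_eq_natCast_iff' A B 2).mp h]

section Sums

variable {ι R : Type*} [DecidableEq ι] [AddCommGroup R]

lemma sum_update_eq_add (s : Finset ι) (w : ι → R) (k : ι) (β : R) :
    ∑ l ∈ s, update w k β l = ∑ l ∈ s, w l + if k ∈ s then β - w k else 0 := by
  split_ifs with hk
  · rw [sum_update_of_mem hk, sum_eq_add_sum_sdiff_singleton_of_mem hk]
    abel
  · rw [sum_update_of_notMem hk, add_zero]

lemma sum_comp_swap_eq_add (s : Finset ι) (w : ι → R) {i j : ι} (hij : i ≠ j) :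
    ∑ l ∈ s, w (Equiv.swap i j l)
      = ∑ l ∈ s, w l + (if j ∈ s then w i - w j else 0)
        + if i ∈ s then w j - w i else 0 := by
  simp only [← comp_apply (f := w), Equiv.comp_swap_eq_update, sum_update_eq_add,
    update_of_ne hij]

end Sums

section Exponents

variable {R : Type*} [CommSemiring R] {m : ℕ}

/- The exponents of the Koszul signs in the entries of `P_{ij}` (`transpExp`) and of
`E_{ab}^{(k)}` (`siteExp`), in terms of the grades `w` of the row index and `β = [b]`. -/
def transpExp (w : Fin m → R) (i j : Fin m) : R :=
  w j * w i + (w j + w i) * ∑ l ∈ univ.filter (fun l => i < l ∧ l < j), w l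

def siteExp (w : Fin m → R) (k : Fin m) (β : R) : R :=
  (w k + β) * ∑ l ∈ univ.filter (· < k), w l

lemma natCast_transpExp (w : Fin m → ℕ) (i j : Fin m) :
    ((transpExp w i j : ℕ) : R) = transpExp (fun l => (w l : R)) i j := by
  simp [transpExp]

lemma natCast_siteExp (w : Fin m → ℕ) (k : Fin m) (β : ℕ) :
    ((siteExp w k β : ℕ) : R) = siteExp (fun l => (w l : R)) k β := by
  simp [siteExp]

lemma siteExp_zero (w : Fin (m + 1) → R) (β : R) : siteExp w 0 β = 0 := by
  simp [siteExp]

lemma siteExp_comp_cons_succ {α : Type*} (g : α → R) (x : α) (w : Fin m → α) (k : Fin m)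
    (β : R) :
    siteExp (fun l => g ((Fin.cons x w : Fin (m + 1) → α) l)) k.succ β
      = (g (w k) + β) * g x + siteExp (fun l => g (w l)) k β := by
  simp only [siteExp, sum_filter, Fin.sum_univ_succ, Fin.cons_zero, Fin.cons_succ,
    Fin.succ_lt_succ_iff, Fin.succ_pos, if_true]
  ring

end Exponents

/-- The sign exponents of `E^{(k)} P_{0j} = P_{0j} E^{(swap 0 j k)}`, compared mod 2. -/
lemma siteExp_add_transpExp {R : Type*} [CommRing R] [CharP R 2] {m : ℕ}
    (w : Fin (m + 1) → R) {j : Fin (m + 1)} (hj : j ≠ 0) (k : Fin (m + 1)) (β : R) :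
    siteExp w k β + transpExp (update w k β) 0 j
      = transpExp w 0 j + siteExp (w ∘ Equiv.swap 0 j) (Equiv.swap 0 j k) β := by
  have interior : ∀ v : Fin (m + 1) → R, ∑ l ∈ univ.filter (fun l => 0 < l ∧ l < j), v l
      = ∑ l ∈ univ.filter (· < j), v l - v 0 := by
    intro v
    simp only [sum_filter, Fin.sum_univ_succ, lt_irrefl, false_and, if_false, Fin.succ_pos,
      true_and, Fin.pos_iff_ne_zero.mpr hj, if_true]
    abel
  have hj0 : (0 : Fin (m + 1)) ≠ j := hj.symm
  simp only [siteExp, transpExp, interior, sum_update_eq_add, comp_apply,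
    sum_comp_swap_eq_add _ _ hj0, Equiv.swap_apply_self, mem_filter, mem_univ, true_and]
  rcases eq_or_ne k 0 with rfl | hk0
  · simp only [not_lt_zero, filter_false, sum_empty, mul_zero, update_of_ne hj, update_self,
      Fin.pos_iff_ne_zero.mpr hj, ↓reduceIte, zero_add, Equiv.swap_apply_left, lt_self_iff_false,
      add_zero]
    grind
  rcases eq_or_ne k j with rfl | hkj
  · simp only [update_self, update_of_ne hj0, lt_self_iff_false, ↓reduceIte, add_zero,
      Equiv.swap_apply_right, not_lt_zero, filter_false, sum_empty, mul_zero]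
    grind
  · simp only [update_of_ne (Ne.symm hkj), update_of_ne hk0.symm,
      Equiv.swap_apply_of_ne_of_ne hk0 hkj, Fin.pos_iff_ne_zero.mpr hk0, ↓reduceIte]
    split_ifs <;> grind

section GraphMatrix

variable {ι R : Type*} [DecidableEq ι]

def graphMat [Zero R] (φ : ι → ι) (s : ι → R) : Matrix ι ι R :=
  Matrix.of fun f g => if g = φ f then s f else 0

lemma graphMat_mul [Fintype ι] [NonUnitalNonAssocSemiring R] (φ ψ : ι → ι) (s t : ι → R) :
    graphMat φ s * graphMat ψ t = graphMat (ψ ∘ φ) fun f => s f * t (φ f) := by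
  ext f g
  rw [Matrix.mul_apply, sum_eq_single (φ f) (fun h _ hne => by simp [graphMat, hne]) (by simp)]
  simp [graphMat, mul_ite]

end GraphMatrix

/-- The paper's `E_{ab}^{(k)}`. -/
def siteE (M n m : ℕ) (a b : Fin n) (k : Fin m) : Ten n m :=
  graphMat (fun f => update f k b)
    fun f => if f k = a then (-1 : ℂ) ^ siteExp (fun l => gr M (f l)) k (gr M b) else 0

lemma Delta_eq_sum_siteE (M n m : ℕ) (a b : Fin n) :
    Delta M n m a b = ∑ k, siteE M n m a b k := by
  refine sum_congr rfl fun k _ => ?_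
  ext f g
  simp only [siteE, graphMat, siteExp, Matrix.of_apply, eq_update_iff]
  by_cases hfg : g k = b ∧ ∀ l ≠ k, g l = f l
  · have hsum :
        ∑ l ∈ univ.filter (· < k), gr M (g l) = ∑ l ∈ univ.filter (· < k), gr M (f l) :=
      sum_congr rfl fun l hl => by rw [hfg.2 l (mem_filter.mp hl).2.ne]
    by_cases hfa : f k = a
    · simp [hfa, hfg, hsum, eq_comm]
    · simp [hfa]
  · rw [if_neg hfg, if_neg]
    exact fun h => hfg ⟨h.2.1, fun l hl => (h.2.2 l hl).symm⟩

lemma eq_comp_swap_iff {α β : Type*} [DecidableEq α] (f g : α → β) (i j : α) :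
    g = f ∘ Equiv.swap i j
      ↔ (∀ l, l ≠ i → l ≠ j → f l = g l) ∧ f i = g j ∧ f j = g i := by
  constructor
  · rintro rfl
    refine ⟨fun l hi hj => ?_, ?_, ?_⟩ <;> simp [Equiv.swap_apply_of_ne_of_ne, *]
  · rintro ⟨hl, hi, hj⟩
    funext l
    rcases eq_or_ne l i with rfl | hli
    · simp [hj]
    rcases eq_or_ne l j with rfl | hlj
    · simp [hi]
    · simp [Equiv.swap_apply_of_ne_of_ne hli hlj, hl l hli hlj]

lemma kEmb_Pm (M n m : ℕ) (i j : Fin m) :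
    kEmb M n m i j (Pm M n) = graphMat (fun f => f ∘ Equiv.swap i j)
      fun f => (-1 : ℂ) ^ transpExp (fun l => gr M (f l)) i j := by
  ext f g
  simp only [kEmb, Pm, graphMat, Matrix.of_apply, eq_comp_swap_iff]
  by_cases hfg : (∀ l, l ≠ i → l ≠ j → f l = g l) ∧ f i = g j ∧ f j = g i
  · obtain ⟨hl, hi, hj⟩ := hfg
    have hsum : ∑ l ∈ univ.filter (fun l => i < l ∧ l < j), gr M (g l)
        = ∑ l ∈ univ.filter (fun l => i < l ∧ l < j), gr M (f l) :=
      sum_congr rfl fun l hl' => by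
        obtain ⟨hil, hlj⟩ := (mem_filter.mp hl').2
        rw [hl l hil.ne' hlj.ne]
    rw [if_pos hl, if_pos ⟨hi, hj⟩, if_pos ⟨hl, hi, hj⟩, ← hi, ← hj, hsum, one_mul,
      transpExp, pow_add]
  · rw [if_neg hfg]
    by_cases hl : ∀ l, l ≠ i → l ≠ j → f l = g l
    · rw [if_neg fun h => hfg ⟨hl, h⟩]; simp
    · rw [if_neg hl]; simp

lemma siteE_mul_kEmb_Pm (M n m : ℕ) (a b : Fin n) {j : Fin (m + 1)} (hj : j ≠ 0)
    (k : Fin (m + 1)) :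
    siteE M n (m + 1) a b k * kEmb M n (m + 1) 0 j (Pm M n)
      = kEmb M n (m + 1) 0 j (Pm M n) * siteE M n (m + 1) a b (Equiv.swap 0 j k) := by
  rw [siteE, siteE, kEmb_Pm, graphMat_mul, graphMat_mul]
  congr 1
  · funext f
    simp [update_comp_equiv]
  · funext f
    simp only [comp_apply, Equiv.swap_apply_self]
    split_ifs
    · rw [← pow_add, ← pow_add]
      apply neg_one_pow_eq_of_natCast_eq
      have hupd : (fun l => ((gr M (update f k b l) : ℕ) : ZMod 2))
          = update (fun l => (gr M (f l) : ZMod 2)) k (gr M b) :=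
        comp_update (fun c => (gr M c : ZMod 2)) f k b
      push_cast [natCast_siteExp, natCast_transpExp, hupd]
      exact siteExp_add_transpExp _ hj k _
    · simp

lemma Delta_commute_kEmb_Pm (M n m : ℕ) (a b : Fin n) {j : Fin (m + 1)} (hj : j ≠ 0) :
    Commute (Delta M n (m + 1) a b) (kEmb M n (m + 1) 0 j (Pm M n)) := by
  rw [Commute, SemiconjBy, Delta_eq_sum_siteE, sum_mul, mul_sum,
    ← Equiv.sum_comp (Equiv.swap 0 j)
      (fun k => kEmb M n (m + 1) 0 j (Pm M n) * siteE M n (m + 1) a b k)]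
  exact sum_congr rfl fun k _ => siteE_mul_kEmb_Pm M n m a b hj k

lemma kEmb_one (M n m : ℕ) (i j : Fin m) : kEmb M n m i j 1 = 1 := by
  ext f g
  by_cases hfg : f = g
  · subst hfg
    simp [kEmb, ← two_mul, pow_mul]
  · have hne : ¬((∀ l, l ≠ i → l ≠ j → f l = g l) ∧ f i = g i ∧ f j = g j) :=
      fun ⟨hl, hi, hj⟩ => hfg <| funext fun l => by
        rcases eq_or_ne l i with rfl | hli
        · exact hi
        rcases eq_or_ne l j with rfl | hlj
        · exact hj
        exact hl l hli hlj
    simp only [kEmb, Matrix.of_apply, Matrix.one_apply, Prod.mk.injEq, hfg, if_false]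
    split_ifs <;> simp_all

lemma kEmb_Rm (M n m : ℕ) (i j : Fin m) (hb u : ℂ) :
    kEmb M n m i j (Rm M n hb u) = u • 1 - hb • kEmb M n m i j (Pm M n) := by
  rw [← kEmb_one M n m i j]
  ext f g
  simp only [kEmb, Rm, Matrix.of_apply, Matrix.sub_apply, Matrix.smul_apply, smul_eq_mul]
  ring

lemma Delta_commute_Tmono (M n L : ℕ) (a b : Fin n) (hb : ℂ) (sh : Fin L → ℂ) (u : ℂ) :
    Commute (Delta M n (L + 1) a b) (Tmono M n L hb sh u) := by
  refine Commute.list_prod_right _ _ fun X hX => ?_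
  obtain ⟨k, rfl⟩ := List.mem_ofFn.mp hX
  rw [kEmb_Rm]
  exact ((Commute.one_right _).smul_right _).sub_right
    ((Delta_commute_kEmb_Pm M n L a b k.succ_ne_zero).smul_right _)

section Blocks

variable {n L : ℕ}

lemma blk_add (X Y : Ten n (L + 1)) (i c : Fin n) : blk (X + Y) i c = blk X i c + blk Y i c :=
  rfl

lemma blk_sum {κ : Type*} (s : Finset κ) (X : κ → Ten n (L + 1)) (i c : Fin n) :
    blk (∑ k ∈ s, X k) i c = ∑ k ∈ s, blk (X k) i c := by
  ext f g
  simp [blk, Matrix.sum_apply]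

lemma blk_mul (X Y : Ten n (L + 1)) (i c : Fin n) :
    blk (X * Y) i c = ∑ d, blk X i d * blk Y d c := by
  ext f g
  simp only [blk, Matrix.of_apply, Matrix.mul_apply, Matrix.sum_apply]
  rw [← (Fin.consEquiv fun _ => Fin n).sum_comp, Fintype.sum_prod_type]
  rfl

end Blocks

lemma blk_siteE_zero (M n L : ℕ) (a b i c : Fin n) :
    blk (siteE M n (L + 1) a b 0) i c = if i = a ∧ c = b then 1 else 0 := by
  ext f g
  simp only [blk, siteE, graphMat, Matrix.of_apply, Fin.update_cons_zero, Fin.cons_inj,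
    Fin.cons_zero, siteExp_zero, pow_zero]
  split_ifs <;> simp_all [Matrix.one_apply, eq_comm]

lemma blk_siteE_succ (M n L : ℕ) (a b i c : Fin n) (k : Fin L) :
    blk (siteE M n (L + 1) a b k.succ) i c
      = if i = c then (-1 : ℂ) ^ ((gr M a + gr M b) * gr M c) • siteE M n L a b k else 0 := by
  ext f g
  simp only [blk, siteE, graphMat, Matrix.of_apply, ← Fin.cons_update, Fin.cons_inj,
    Fin.cons_succ, siteExp_comp_cons_succ]
  split_ifs <;> simp_all [pow_add, eq_comm]

lemma blk_Delta_succ (M n L : ℕ) (a b i c : Fin n) :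
    blk (Delta M n (L + 1) a b) i c
      = (if i = a ∧ c = b then 1 else 0)
        + if i = c then (-1 : ℂ) ^ ((gr M a + gr M b) * gr M c) • Delta M n L a b else 0 := by
  rw [Delta_eq_sum_siteE, Fin.sum_univ_succ, blk_add, blk_sum, blk_siteE_zero,
    Delta_eq_sum_siteE]
  simp only [blk_siteE_succ]
  split_ifs <;> simp [smul_sum]

def superTrace (M : ℕ) {n L : ℕ} (X : Ten n (L + 1)) : Ten n L :=
  ∑ i : Fin n, (-1 : ℂ) ^ gr M i • blk X i i

lemma sum_blk_Delta_mul (M n L : ℕ) (a b : Fin n) (X : Ten n (L + 1)) (i : Fin n) :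
    ∑ d, blk (Delta M n (L + 1) a b) i d * blk X d i
      = (if i = a then blk X b i else 0)
        + (-1 : ℂ) ^ ((gr M a + gr M b) * gr M i) • (Delta M n L a b * blk X i i) := by
  by_cases hi : i = a <;> simp [blk_Delta_succ, add_mul, ite_mul, sum_add_distrib, hi]

lemma sum_blk_mul_Delta (M n L : ℕ) (a b : Fin n) (X : Ten n (L + 1)) (i : Fin n) :
    ∑ d, blk X i d * blk (Delta M n (L + 1) a b) d i
      = (if i = b then blk X i a else 0)
        + (-1 : ℂ) ^ ((gr M a + gr M b) * gr M i) • (blk X i i * Delta M n L a b) := by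
  by_cases hi : i = b <;> simp [blk_Delta_succ, mul_add, mul_ite, sum_add_distrib, hi]

lemma neg_one_pow_mul_one_add_add_mul_self (x y z : ℕ) :
    (-1 : ℂ) ^ (x * (1 + y + z)) * (-1) ^ ((y + z) * x) = (-1) ^ x := by
  rw [← pow_add]
  apply neg_one_pow_eq_of_natCast_eq
  push_cast
  grind

lemma neg_one_pow_mul_one_add_add_comm (x y : ℕ) :
    (-1 : ℂ) ^ (x * (1 + x + y)) = (-1) ^ (y * (1 + x + y)) := by
  apply neg_one_pow_eq_of_natCast_eq
  push_cast
  generalize (x : ZMod 2) = X, (y : ZMod 2) = Y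
  revert X Y
  decide

/-- The weights `(-1)^([i](1+[a]+[b]))` turn the graded sign of `1 ⊗ Δ(E_{ab})` into the
supertrace sign. -/
lemma sum_weighted_blk_Delta_mul (M n L : ℕ) (a b : Fin n) (X : Ten n (L + 1)) :
    ∑ i, (-1 : ℂ) ^ (gr M i * (1 + gr M a + gr M b)) • blk (Delta M n (L + 1) a b * X) i i
      = (-1 : ℂ) ^ (gr M a * (1 + gr M a + gr M b)) • blk X b a
        + Delta M n L a b * superTrace M X := by
  simp only [blk_mul, sum_blk_Delta_mul, smul_add, sum_add_distrib, smul_ite, smul_zero,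
    sum_ite_eq', mem_univ, if_true, smul_smul, neg_one_pow_mul_one_add_add_mul_self,
    superTrace, mul_sum, mul_smul_comm]

lemma sum_weighted_blk_mul_Delta (M n L : ℕ) (a b : Fin n) (X : Ten n (L + 1)) :
    ∑ i, (-1 : ℂ) ^ (gr M i * (1 + gr M a + gr M b)) • blk (X * Delta M n (L + 1) a b) i i
      = (-1 : ℂ) ^ (gr M b * (1 + gr M a + gr M b)) • blk X b a
        + superTrace M X * Delta M n L a b := by
  simp only [blk_mul, sum_blk_mul_Delta, smul_add, sum_add_distrib, smul_ite, smul_zero,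
    sum_ite_eq', mem_univ, if_true, smul_smul, neg_one_pow_mul_one_add_add_mul_self,
    superTrace, sum_mul, smul_mul_assoc]

lemma Delta_commute_superTrace_of_commute (M n L : ℕ) (a b : Fin n) {X : Ten n (L + 1)}
    (h : Commute (Delta M n (L + 1) a b) X) : Commute (Delta M n L a b) (superTrace M X) := by
  have := sum_weighted_blk_Delta_mul M n L a b X
  rw [h.eq, sum_weighted_blk_mul_Delta, neg_one_pow_mul_one_add_add_comm] at this
  exact (add_left_cancel this).symm

theorem statement8_general (M N : ℕ) (hb : ℂ) (L : ℕ) (sh : Fin L → ℂ) :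
    ∀ (a b : Fin (M + N)) (u : ℂ),
      Delta M (M + N) L a b * stm M (M + N) L hb sh u
        = stm M (M + N) L hb sh u * Delta M (M + N) L a b := by
  intro a b u
  exact Delta_commute_superTrace_of_commute M (M + N) L a b
    (Delta_commute_Tmono M (M + N) L a b hb sh u)

/-- The supertrace transfer matrix enjoys the full `gl(M|N)`
symmetry: `[Δ(E_{ab}), st(u)] = 0` for all `a, b` and all `u`. -/
theorem statement8 (M N : ℕ) (hM : 1 ≤ M) (hN : 1 ≤ N) (hb : ℂ) (hhb : hb ≠ 0)
    (L : ℕ) (hL : 1 ≤ L) (sh : Fin L → ℂ) :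
    ∀ (a b : Fin (M + N)) (u : ℂ),
      Delta M (M + N) L a b * stm M (M + N) L hb sh u
        = stm M (M + N) L hb sh u * Delta M (M + N) L a b :=
  statement8_general M N hb L sh

end SuperSpin
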